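/- arXiv:0710.2070 — 2 statements merged into one kernel-verified Lean document; each statement's English description precedes it below -/
import Mathlib

section
/- Let R be a commutative ring, let (N, d_N) and (M, d_M) be differential R-modules, let π : N → M and ∇ : M → N be chain maps, and let h : N → N be an R-linear map such that π ∘ ∇ = id_M and d_N ∘ h + h ∘ d_N = id_N − ∇ ∘ π (the side conditions π ∘ h = 0, h ∘ ∇ = 0, h ∘ h = 0 are NOT assumed). Write p = id_N − ∇ ∘ π and define h̃ = p ∘ h ∘ p ∘ d_N ∘ p ∘ h ∘ p. Then h̃ satisfies: d_N ∘ h̃ + h̃ ∘ d_N = id_N − ∇ ∘ π, π ∘ h̃ = 0, h̃ ∘ ∇ = 0, and h̃ ∘ h̃ = 0. In other words, the side conditions of a contraction can always be achieved by replacing h with h̃. -/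
/-!
In the ring `End N`, `p = 1 - ∇π` is an idempotent commuting with `d`, killed by `π` on the
left and by `∇` on the right. Sandwiching gives `q = p h p` with `d q + q d = p` and
`p q = q = q p`. Then `d q d = p d`, from which `H = q d q` is again a homotopy, and
`(d q)(q d) = (p - q d) q d = 0` gives `H H = q (d q q d) q = 0`.
-/

section Ring

variable {A : Type*} [Ring A] {d p h q : A}

theorem mul_add_mul_sandwich_eq (hdp : Commute d p) (hp : IsIdempotentElem p)
    (hh : d * h + h * d = p) : d * (p * h * p) + p * h * p * d = p := by
  have hl : d * (p * h * p) = p * (d * h) * p := by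
    rw [← mul_assoc, ← mul_assoc, hdp.eq, mul_assoc p d h]
  have hr : p * h * p * d = p * (h * d) * p := by
    rw [mul_assoc, ← hdp.eq, ← mul_assoc, mul_assoc p h d]
  rw [hl, hr, ← add_mul, ← mul_add, hh, hp.eq, hp.eq]

theorem mul_mul_mul_eq_of_homotopy (hd : d * d = 0) (hq : d * q + q * d = p) :
    d * q * d = p * d := by
  rw [← hq, add_mul, mul_assoc q d d, hd, mul_zero, add_zero]

theorem mul_add_mul_mul_mul_eq_of_homotopy (hd : d * d = 0) (hdp : Commute d p)
    (hpq : p * q = q) (hqp : q * p = q) (hq : d * q + q * d = p) :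
    d * (q * d * q) + q * d * q * d = p :=
  calc d * (q * d * q) + q * d * q * d = d * q * d * q + q * (d * q * d) := by noncomm_ring
    _ = d * q + q * d := by
      rw [mul_mul_mul_eq_of_homotopy hd hq, ← mul_assoc q p d, hqp, ← hdp.eq, mul_assoc, hpq]
    _ = p := hq

theorem mul_mul_mul_sq_eq_zero_of_homotopy (hd : d * d = 0) (hpq : p * q = q)
    (hqp : q * p = q) (hq : d * q + q * d = p) : (q * d * q) * (q * d * q) = 0 := by
  have hdqqd : d * q * (q * d) = 0 :=
    calc d * q * (q * d) = (p - q * d) * (q * d) := by rw [eq_sub_of_add_eq hq]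
      _ = p * q * d - q * (d * q * d) := by noncomm_ring
      _ = 0 := by rw [hpq, mul_mul_mul_eq_of_homotopy hd hq, ← mul_assoc, hqp, sub_self]
  calc (q * d * q) * (q * d * q) = q * (d * q * (q * d)) * q := by noncomm_ring
    _ = 0 := by rw [hdqqd, mul_zero, zero_mul]

end Ring

section Retract

variable {R M N : Type*} [CommRing R] [AddCommGroup M] [Module R M] [AddCommGroup N]
  [Module R N] {pr : N →ₗ[R] M} {nb : M →ₗ[R] N}

theorem LinearMap.isIdempotentElem_comp_of_comp_eq_id (hretr : pr ∘ₗ nb = LinearMap.id) :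
    IsIdempotentElem (nb ∘ₗ pr : Module.End R N) := by
  change nb ∘ₗ (pr ∘ₗ nb) ∘ₗ pr = nb ∘ₗ pr
  rw [hretr, LinearMap.id_comp]

theorem LinearMap.comp_id_sub_comp_eq_zero (hretr : pr ∘ₗ nb = LinearMap.id) :
    pr ∘ₗ (LinearMap.id - nb ∘ₗ pr) = 0 := by
  rw [LinearMap.comp_sub, LinearMap.comp_id, ← LinearMap.comp_assoc, hretr,
    LinearMap.id_comp, sub_self]

theorem LinearMap.id_sub_comp_comp_eq_zero (hretr : pr ∘ₗ nb = LinearMap.id) :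
    (LinearMap.id - nb ∘ₗ pr) ∘ₗ nb = 0 := by
  rw [LinearMap.sub_comp, LinearMap.id_comp, LinearMap.comp_assoc, hretr,
    LinearMap.comp_id, sub_self]

theorem LinearMap.commute_comp_of_chain_maps {dN : N →ₗ[R] N} {dM : M →ₗ[R] M}
    (hpr : pr ∘ₗ dN = dM ∘ₗ pr) (hnb : dN ∘ₗ nb = nb ∘ₗ dM) :
    Commute dN (nb ∘ₗ pr : Module.End R N) := by
  change dN ∘ₗ nb ∘ₗ pr = nb ∘ₗ pr ∘ₗ dN
  rw [hpr, ← LinearMap.comp_assoc, hnb, LinearMap.comp_assoc]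

end Retract

theorem contraction_side_conditions_achievable_general
    {R M N : Type*} [CommRing R]
    [AddCommGroup M] [Module R M] [AddCommGroup N] [Module R N]
    (dN : N →ₗ[R] N) (dM : M →ₗ[R] M)
    (hdN : dN ∘ₗ dN = 0)
    (pr : N →ₗ[R] M) (nb : M →ₗ[R] N) (h : N →ₗ[R] N)
    (hpr : pr ∘ₗ dN = dM ∘ₗ pr) (hnb : dN ∘ₗ nb = nb ∘ₗ dM)
    (hretr : pr ∘ₗ nb = LinearMap.id)
    (hhtp : dN ∘ₗ h + h ∘ₗ dN = LinearMap.id - nb ∘ₗ pr) :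
    let p : N →ₗ[R] N := LinearMap.id - nb ∘ₗ pr
    let h' : N →ₗ[R] N := p ∘ₗ h ∘ₗ p ∘ₗ dN ∘ₗ p ∘ₗ h ∘ₗ p
    dN ∘ₗ h' + h' ∘ₗ dN = LinearMap.id - nb ∘ₗ pr ∧
      pr ∘ₗ h' = 0 ∧ h' ∘ₗ nb = 0 ∧ h' ∘ₗ h' = 0 := by
  intro p h'
  have hp : IsIdempotentElem (p : Module.End R N) :=
    (LinearMap.isIdempotentElem_comp_of_comp_eq_id hretr).one_sub
  have hdp : Commute dN (p : Module.End R N) :=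
    (Commute.one_right dN).sub_right (LinearMap.commute_comp_of_chain_maps hpr hnb)
  set q : Module.End R N := p * h * p with hq_def
  have hq : dN * q + q * dN = p := mul_add_mul_sandwich_eq hdp hp hhtp
  have hpq : p * q = q := by rw [hq_def, ← mul_assoc, ← mul_assoc, hp.eq]
  have hqp : q * p = q := by rw [hq_def, mul_assoc, hp.eq]
  have hh' : h' = q * dN * q := rfl
  refine ⟨?_, ?_, ?_, ?_⟩
  · rw [hh']
    exact mul_add_mul_mul_mul_eq_of_homotopy hdN hdp hpq hqp hq
  · change (pr ∘ₗ p) ∘ₗ _ = 0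
    rw [LinearMap.comp_id_sub_comp_eq_zero hretr, LinearMap.zero_comp]
  · change (p ∘ₗ h ∘ₗ p ∘ₗ dN ∘ₗ p ∘ₗ h) ∘ₗ (p ∘ₗ nb) = 0
    rw [LinearMap.id_sub_comp_comp_eq_zero hretr, LinearMap.comp_zero]
  · rw [hh']
    exact mul_mul_mul_sq_eq_zero_of_homotopy hdN hpq hqp hq

/-- **Achieving the side conditions of a contraction** (Remark 2.1 of the paper).
Given chain maps `pr : N → M`, `nb : M → N` between differential `R`-modules and a
homotopy `h : N → N` with `pr ∘ nb = id` and `dN ∘ h + h ∘ dN = id − nb ∘ pr`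
(the side conditions NOT being assumed), the operator
`h' = p ∘ h ∘ p ∘ dN ∘ p ∘ h ∘ p`, where `p = id − nb ∘ pr`, satisfies the
homotopy condition together with all three side conditions. -/
theorem contraction_side_conditions_achievable
    {R M N : Type*} [CommRing R]
    [AddCommGroup M] [Module R M] [AddCommGroup N] [Module R N]
    (dN : N →ₗ[R] N) (dM : M →ₗ[R] M)
    (hdN : dN ∘ₗ dN = 0) (hdM : dM ∘ₗ dM = 0)
    (pr : N →ₗ[R] M) (nb : M →ₗ[R] N) (h : N →ₗ[R] N)
    (hpr : pr ∘ₗ dN = dM ∘ₗ pr) (hnb : dN ∘ₗ nb = nb ∘ₗ dM)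
    (hretr : pr ∘ₗ nb = LinearMap.id)
    (hhtp : dN ∘ₗ h + h ∘ₗ dN = LinearMap.id - nb ∘ₗ pr) :
    let p : N →ₗ[R] N := LinearMap.id - nb ∘ₗ pr
    let h' : N →ₗ[R] N := p ∘ₗ h ∘ₗ p ∘ₗ dN ∘ₗ p ∘ₗ h ∘ₗ p
    dN ∘ₗ h' + h' ∘ₗ dN = LinearMap.id - nb ∘ₗ pr ∧
      pr ∘ₗ h' = 0 ∧ h' ∘ₗ nb = 0 ∧ h' ∘ₗ h' = 0 :=
  contraction_side_conditions_achievable_general dN dM hdN pr nb h hpr hnb hretr hhtp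
end

section
/- Let R be a commutative ring in which 2 is invertible, let Y be an R-module, and let f : Y → Y ⊗_R Y be an R-linear map such that τ ∘ f = −f, where τ : Y ⊗_R Y → Y ⊗_R Y is the interchange map x ⊗ y ↦ y ⊗ x. Let m : Y ⊗_R Y → TensorAlgebra R Y be the R-linear map determined by x ⊗ y ↦ ι(x) · ι(y), where ι : Y → TensorAlgebra R Y is the canonical inclusion. Then for every y ∈ Y, the element m(f(y)) lies in the Lie subalgebra of TensorAlgebra R Y (under the commutator bracket [a, b] = a·b − b·a) generated by the image of ι, i.e. in the free Lie algebra L[Y] on Y inside the tensor algebra. -/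
open scoped TensorProduct

attribute [local instance] LieRing.ofAssociativeRing

/-! An anti-invariant tensor `t` satisfies `2 • t = t - τ t`, and the multiplication map sends
`t - τ t` to a sum of commutators `⁅ι a, ι b⁆`; since `2` is invertible, `m t` is then in the Lie
subalgebra generated by the `ι a`. -/

theorem LieSubalgebra.map_sub_map_comm_mem_lieSpan_range {R Y A : Type*} [CommRing R]
    [AddCommGroup Y] [Module R Y] [Ring A] [Algebra R A] (φ : Y → A) (m : Y ⊗[R] Y →ₗ[R] A)
    (hm : ∀ x y : Y, m (x ⊗ₜ[R] y) = φ x * φ y) (t : Y ⊗[R] Y) :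
    m t - m (TensorProduct.comm R Y Y t) ∈ lieSpan R A (Set.range φ) := by
  induction t using TensorProduct.induction_on with
  | zero => simp
  | tmul a b =>
    have hcomm : m (a ⊗ₜ b) - m (TensorProduct.comm R Y Y (a ⊗ₜ b)) = ⁅φ a, φ b⁆ := by
      rw [TensorProduct.comm_tmul, hm, hm, Ring.lie_def]
    rw [hcomm]
    exact lie_mem _ (subset_lieSpan ⟨a, rfl⟩) (subset_lieSpan ⟨b, rfl⟩)
  | add s t hs ht =>
    rw [map_add, map_add, map_add, add_sub_add_comm]
    exact add_mem hs ht

/-- **Anti-symmetric maps into `Y ⊗ Y` land in the free Lie algebra** (core of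
the unnamed Lemma in Section 2 of the paper): if `2` is invertible in `R` and
`f : Y → Y ⊗ Y` is an `R`-linear map with `τ ∘ f = −f` for the interchange map
`τ`, then for every `y`, the image under `x ⊗ y ↦ ι x * ι y` of `f y` lies in
the Lie subalgebra of the tensor algebra (under the commutator bracket)
generated by the image of `ι`, i.e. in the free Lie algebra `L[Y]` on `Y`. -/
theorem antiInvariant_values_in_freeLieAlgebra
    {R Y : Type*} [CommRing R] [AddCommGroup Y] [Module R Y]
    (htwo : IsUnit (2 : R))
    (f : Y →ₗ[R] Y ⊗[R] Y)
    (hf : ∀ y : Y, TensorProduct.comm R Y Y (f y) = - f y)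
    (m : Y ⊗[R] Y →ₗ[R] TensorAlgebra R Y)
    (hm : ∀ x y : Y, m (x ⊗ₜ[R] y) = TensorAlgebra.ι R x * TensorAlgebra.ι R y)
    (y : Y) :
    m (f y) ∈
      LieSubalgebra.lieSpan R (TensorAlgebra R Y) (Set.range (TensorAlgebra.ι R)) := by
  have hmem := LieSubalgebra.map_sub_map_comm_mem_lieSpan_range (TensorAlgebra.ι R) m hm (f y)
  rw [hf, map_neg, sub_neg_eq_add, ← two_smul R] at hmem
  exact (Submodule.smul_mem_iff_of_isUnit (LieSubalgebra.toSubmodule _) htwo).1 hmem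
end
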